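/- Let r > 0, T > 0 and n ∈ ℕ*. For f ∈ L²(ℝ₊, μ_r; ℝⁿ), the following are equivalent: (i) f is orthogonal to the subspace P̄_T²(ℝ₊, μ_r; ℝⁿ) in L²(ℝ₊, μ_r; ℝⁿ); (ii) for Lebesgue-almost every s ∈ [0,T), Σ_{k=0}^∞ e^{−rkT} f(s + kT) = 0. -/

import Mathlib

open MeasureTheory Real Set RealInnerProductSpace

/-- The weighted measure `μ_r` on `ℝ₊`. -/
noncomputable def muW (r : ℝ) : Measure ℝ :=
  (volume.withDensity fun t => ENNReal.ofReal (Real.exp (-r * t))).restrict (Set.Ici 0)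

/-!
Cutting `[0, ∞)` into the translates `[kT, (k+1)T)` turns `∫ ⟪f, q⟫ dμ_r`, for an a.e.
`T`-periodic `q`, into `∫₀ᵀ ⟪Σₖ e^{-r(s+kT)} f(s+kT), q(s)⟫ ds`; the series converges a.e. and is
integrable on `[0, T)` because `f ∈ L²(μ_r) ⊆ L¹(μ_r)`. So (ii) gives (i) at once, and testing (i)
against the periodic extensions of `1_A • v` shows that the series vanishes a.e. on `[0, T)`.
-/

open scoped ENNReal
open Filter

section SeriesOfIntegrable

variable {α E : Type*} [MeasurableSpace α] {μ : Measure α} [NormedAddCommGroup E]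
  [CompleteSpace E] {f : ℕ → α → E}

lemma ae_summable_of_tsum_lintegral_enorm_ne_top (hf : ∀ k, AEStronglyMeasurable (f k) μ)
    (h : ∑' k, ∫⁻ a, ‖f k a‖ₑ ∂μ ≠ ∞) : ∀ᵐ a ∂μ, Summable fun k => f k a := by
  have hfin : ∀ᵐ a ∂μ, ∑' k, ‖f k a‖ₑ < ∞ :=
    ae_lt_top' (AEMeasurable.tsum fun k => (hf k).enorm)
      (by rwa [lintegral_tsum fun k => (hf k).enorm])
  filter_upwards [hfin] with a ha using (tsum_enorm_ne_top_iff_summable_norm.1 ha.ne).of_norm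

lemma integrable_tsum_of_tsum_lintegral_enorm_ne_top (hf : ∀ k, AEStronglyMeasurable (f k) μ)
    (h : ∑' k, ∫⁻ a, ‖f k a‖ₑ ∂μ ≠ ∞) : Integrable (fun a => ∑' k, f k a) μ := by
  refine ⟨aestronglyMeasurable_of_tendsto_ae atTop
    (fun m => Finset.aestronglyMeasurable_fun_sum (Finset.range m) fun k _ => hf k)
    ((ae_summable_of_tsum_lintegral_enorm_ne_top hf h).mono fun a ha =>
      ha.hasSum.tendsto_sum_nat), ?_⟩
  calc ∫⁻ a, ‖∑' k, f k a‖ₑ ∂μ ≤ ∫⁻ a, ∑' k, ‖f k a‖ₑ ∂μ :=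
        lintegral_mono fun a => enorm_tsum_le_tsum_enorm
    _ = ∑' k, ∫⁻ a, ‖f k a‖ₑ ∂μ := lintegral_tsum fun k => (hf k).enorm
    _ < ∞ := h.lt_top

end SeriesOfIntegrable

section Unfolding

variable {T : ℝ}

lemma iUnion_Ico_nat_mul (hT : 0 < T) : ⋃ k : ℕ, Ico (k * T) ((k + 1) * T) = Ici 0 := by
  have hunbdd : ¬BddAbove (range fun k : ℕ => (k : ℝ) * T) := not_bddAbove_iff.2 fun x => by
    obtain ⟨k, hk⟩ := exists_nat_gt (x / T)
    exact ⟨k * T, ⟨k, rfl⟩, by rwa [div_lt_iff₀ hT] at hk⟩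
  simpa using iUnion_Ico_map_succ_eq_Ici (fun k => by simp; positivity) hunbdd

lemma pairwise_disjoint_Ico_nat_mul (hT : 0 ≤ T) :
    Pairwise (Function.onFun Disjoint fun k : ℕ => Ico (k * T) ((k + 1) * T)) := by
  have hmono : Monotone fun k : ℕ => (k : ℝ) * T := fun i j h =>
    mul_le_mul_of_nonneg_right (by exact_mod_cast h) hT
  simpa using hmono.pairwise_disjoint_on_Ico_succ

lemma measurePreserving_add_nat_mul (k : ℕ) :
    MeasurePreserving (· + k * T) (volume.restrict (Ico 0 T))
      (volume.restrict (Ico (k * T) ((k + 1) * T))) := by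
  have hpre : (· + k * T) ⁻¹' Ico (k * T) ((k + 1) * T) = Ico 0 T := by
    rw [preimage_add_const_Ico]; congr 1 <;> ring
  exact hpre ▸ (measurePreserving_add_right volume ((k : ℝ) * T)).restrict_preimage_emb
    (measurableEmbedding_addRight _) _

lemma quasiMeasurePreserving_add_nat_mul (hT : 0 ≤ T) (k : ℕ) :
    Measure.QuasiMeasurePreserving (· + k * T) (volume.restrict (Ico 0 T))
      (volume.restrict (Ici 0)) :=
  (measurePreserving_add_nat_mul k).quasiMeasurePreserving.mono_right <|
    (Measure.restrict_mono (Ico_subset_Ici_self.trans (Ici_subset_Ici.2 (by positivity)))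
      le_rfl).absolutelyContinuous

lemma ae_restrict_Ico_forall_add_nat_mul (hT : 0 ≤ T) {p : ℝ → Prop}
    (h : ∀ᵐ t ∂volume.restrict (Ici 0), p t) :
    ∀ᵐ s ∂volume.restrict (Ico 0 T), ∀ k : ℕ, p (s + k * T) :=
  ae_all_iff.2 fun k => (quasiMeasurePreserving_add_nat_mul hT k).ae h

lemma ae_restrict_Ico_forall_add_nat_mul_eq {β : Type*} (hT : 0 ≤ T) {q : ℝ → β}
    (hq : ∀ᵐ t ∂volume.restrict (Ici 0), q (t + T) = q t) :
    ∀ᵐ s ∂volume.restrict (Ico 0 T), ∀ k : ℕ, q (s + k * T) = q s := by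
  filter_upwards [ae_restrict_Ico_forall_add_nat_mul hT hq] with s hs k
  induction k with
  | zero => simp
  | succ k ih => rw [Nat.cast_succ, add_one_mul, ← add_assoc, hs k, ih]

lemma lintegral_Ici_eq_tsum (hT : 0 < T) (h : ℝ → ℝ≥0∞) :
    ∫⁻ t in Ici 0, h t = ∑' k : ℕ, ∫⁻ s in Ico 0 T, h (s + k * T) := by
  rw [← iUnion_Ico_nat_mul hT,
    lintegral_iUnion (fun _ => measurableSet_Ico) (pairwise_disjoint_Ico_nat_mul hT.le)]
  exact tsum_congr fun k =>
    ((measurePreserving_add_nat_mul k).lintegral_comp_emb (measurableEmbedding_addRight _) h).symm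

lemma integral_Ici_eq_tsum {E : Type*} [NormedAddCommGroup E] [NormedSpace ℝ E] (hT : 0 < T)
    {φ : ℝ → E} (hφ : IntegrableOn φ (Ici 0)) :
    ∫ t in Ici 0, φ t = ∑' k : ℕ, ∫ s in Ico 0 T, φ (s + k * T) := by
  rw [← iUnion_Ico_nat_mul hT] at hφ ⊢
  rw [integral_iUnion (fun _ => measurableSet_Ico) (pairwise_disjoint_Ico_nat_mul hT.le) hφ]
  exact tsum_congr fun k =>
    ((measurePreserving_add_nat_mul k).integral_comp (measurableEmbedding_addRight _) φ).symm

end Unfolding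

section Periodization

variable {E : Type*} [NormedAddCommGroup E] {T : ℝ} {φ : ℝ → E}

lemma tsum_lintegral_enorm_add_nat_mul_ne_top (hT : 0 < T) (hφ : IntegrableOn φ (Ici 0)) :
    ∑' k : ℕ, ∫⁻ s in Ico 0 T, ‖φ (s + k * T)‖ₑ ≠ ∞ := by
  rw [← lintegral_Ici_eq_tsum hT fun t => ‖φ t‖ₑ]
  exact hφ.2.ne

lemma aestronglyMeasurable_comp_add_nat_mul (hT : 0 ≤ T)
    (hφ : AEStronglyMeasurable φ (volume.restrict (Ici 0))) (k : ℕ) :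
    AEStronglyMeasurable (fun s => φ (s + k * T)) (volume.restrict (Ico 0 T)) :=
  hφ.comp_quasiMeasurePreserving (quasiMeasurePreserving_add_nat_mul hT k)

lemma ae_summable_add_nat_mul [CompleteSpace E] (hT : 0 < T) (hφ : IntegrableOn φ (Ici 0)) :
    ∀ᵐ s ∂volume.restrict (Ico 0 T), Summable fun k : ℕ => φ (s + k * T) :=
  ae_summable_of_tsum_lintegral_enorm_ne_top (aestronglyMeasurable_comp_add_nat_mul hT.le hφ.1)
    (tsum_lintegral_enorm_add_nat_mul_ne_top hT hφ)

lemma integrableOn_tsum_add_nat_mul [CompleteSpace E] (hT : 0 < T)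
    (hφ : IntegrableOn φ (Ici 0)) : IntegrableOn (fun s => ∑' k : ℕ, φ (s + k * T)) (Ico 0 T) :=
  integrable_tsum_of_tsum_lintegral_enorm_ne_top
    (aestronglyMeasurable_comp_add_nat_mul hT.le hφ.1)
    (tsum_lintegral_enorm_add_nat_mul_ne_top hT hφ)

lemma integral_Ici_eq_integral_tsum_add_nat_mul [NormedSpace ℝ E] (hT : 0 < T)
    (hφ : IntegrableOn φ (Ici 0)) :
    ∫ t in Ici 0, φ t = ∫ s in Ico 0 T, ∑' k : ℕ, φ (s + k * T) := by
  rw [integral_tsum (aestronglyMeasurable_comp_add_nat_mul hT.le hφ.1)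
    (tsum_lintegral_enorm_add_nat_mul_ne_top hT hφ), integral_Ici_eq_tsum hT hφ]

end Periodization

section WeightedMeasure

variable {r : ℝ}

lemma muW_eq_withDensity (r : ℝ) :
    muW r = (volume.restrict (Ici 0)).withDensity fun t => ENNReal.ofReal (exp (-r * t)) := by
  rw [muW, restrict_withDensity measurableSet_Ici]

lemma isFiniteMeasure_muW (hr : 0 < r) : IsFiniteMeasure (muW r) := by
  rw [muW_eq_withDensity]
  have h := exp_neg_integrableOn_Ioi 0 hr
  rw [← integrableOn_Ici_iff_integrableOn_Ioi] at h
  exact isFiniteMeasure_withDensity_ofReal h.2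

variable {E : Type*} [NormedAddCommGroup E] [NormedSpace ℝ E]

lemma integral_muW (g : ℝ → E) :
    ∫ t, g t ∂muW r = ∫ t in Ici 0, exp (-r * t) • g t := by
  rw [muW_eq_withDensity, integral_withDensity_eq_integral_toReal_smul (by fun_prop)
    (ae_of_all _ fun _ => ENNReal.ofReal_lt_top)]
  simp only [ENNReal.toReal_ofReal (exp_nonneg _)]

lemma MeasureTheory.Integrable.integrableOn_Ici_exp_smul {g : ℝ → E}
    (hg : Integrable g (muW r)) : IntegrableOn (fun t => exp (-r * t) • g t) (Ici 0) := by
  rw [muW_eq_withDensity, integrable_withDensity_iff_integrable_smul' (by fun_prop)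
    (ae_of_all _ fun _ => ENNReal.ofReal_lt_top)] at hg
  simp only [ENNReal.toReal_ofReal (exp_nonneg _)] at hg
  exact hg

end WeightedMeasure

section PeriodicExtension

variable {β : Type*} {T : ℝ}

noncomputable def periodicExtension (T : ℝ) (g : ℝ → β) (t : ℝ) : β :=
  g (Int.fract (t / T) * T)

lemma periodicExtension_add_self (hT : T ≠ 0) (g : ℝ → β) (t : ℝ) :
    periodicExtension T g (t + T) = periodicExtension T g t := by
  simp only [periodicExtension, add_div, div_self hT, Int.fract_add_one]

lemma periodicExtension_eq_self (hT : 0 < T) (g : ℝ → β) {s : ℝ} (hs : s ∈ Ico 0 T) :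
    periodicExtension T g s = g s := by
  rw [periodicExtension, Int.fract_eq_self.2 ⟨div_nonneg hs.1 hT.le, (div_lt_one hT).2 hs.2⟩,
    div_mul_cancel₀ _ hT.ne']

lemma MeasureTheory.StronglyMeasurable.periodicExtension [TopologicalSpace β] {g : ℝ → β}
    (hg : StronglyMeasurable g) : StronglyMeasurable (periodicExtension T g) :=
  hg.comp_measurable ((measurable_fract.comp (measurable_id.div_const T)).mul_const T)

end PeriodicExtension

section Orthogonality

variable {E : Type*} [NormedAddCommGroup E] [InnerProductSpace ℝ E] {r T : ℝ}

lemma MeasureTheory.MemLp.integrable_inner {α : Type*} [MeasurableSpace α] {μ : Measure α}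
    {f g : α → E} (hf : MemLp f 2 μ) (hg : MemLp g 2 μ) : Integrable (fun x => ⟪f x, g x⟫) μ :=
  (L2.integrable_inner (hf.toLp f) (hg.toLp g)).congr <| by
    filter_upwards [hf.coeFn_toLp, hg.coeFn_toLp] with x hfx hgx
    rw [hfx, hgx]

lemma integral_inner_muW_eq_integral_Ico [CompleteSpace E] (hr : 0 < r) (hT : 0 < T)
    {F q : ℝ → E} (hF : MemLp F 2 (muW r)) (hq : MemLp q 2 (muW r))
    (hq_per : ∀ᵐ t ∂volume.restrict (Ici 0), q (t + T) = q t) :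
    ∫ t, ⟪F t, q t⟫ ∂muW r =
      ∫ s in Ico 0 T, ⟪∑' k : ℕ, exp (-r * (s + k * T)) • F (s + k * T), q s⟫ := by
  have := isFiniteMeasure_muW hr
  have hφ := (hF.integrable one_le_two).integrableOn_Ici_exp_smul
  have hφq : IntegrableOn (fun t => ⟪exp (-r * t) • F t, q t⟫) (Ici 0) := by
    simpa only [real_inner_smul_left, smul_eq_mul] using
      (hF.integrable_inner hq).integrableOn_Ici_exp_smul
  calc ∫ t, ⟪F t, q t⟫ ∂muW r = ∫ t in Ici 0, ⟪exp (-r * t) • F t, q t⟫ := by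
        simp_rw [integral_muW, real_inner_smul_left, smul_eq_mul]
    _ = ∫ s in Ico 0 T, ∑' k : ℕ,
          ⟪exp (-r * (s + k * T)) • F (s + k * T), q (s + k * T)⟫ :=
        integral_Ici_eq_integral_tsum_add_nat_mul hT hφq
    _ = _ := by
        refine integral_congr_ae ?_
        filter_upwards [ae_restrict_Ico_forall_add_nat_mul_eq hT.le hq_per,
          ae_summable_add_nat_mul hT hφ] with s hs hsum
        simp_rw [hs, real_inner_comm (q s)]
        exact ((innerSL ℝ (q s)).map_tsum hsum).symm

lemma ae_tsum_eq_zero_of_forall_periodic_integral_inner_eq_zero [CompleteSpace E] (hr : 0 < r)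
    (hT : 0 < T) {F : ℝ → E} (hF : MemLp F 2 (muW r))
    (H : ∀ q : ℝ → E, MemLp q 2 (muW r) → (∀ᵐ t ∂volume.restrict (Ici 0), q (t + T) = q t) →
      ∫ t, ⟪F t, q t⟫ ∂muW r = 0) :
    ∀ᵐ s ∂volume.restrict (Ico 0 T), ∑' k : ℕ, exp (-r * (s + k * T)) • F (s + k * T) = 0 := by
  have := isFiniteMeasure_muW hr
  set P := fun s => ∑' k : ℕ, exp (-r * (s + k * T)) • F (s + k * T)
  have hP : IntegrableOn P (Ico 0 T) :=
    integrableOn_tsum_add_nat_mul hT (hF.integrable one_le_two).integrableOn_Ici_exp_smul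
  have hP_inner : ∀ A, MeasurableSet A → ∀ v : E,
      ∫ s in A, ⟪v, P s⟫ ∂volume.restrict (Ico 0 T) = 0 := by
    intro A hA v
    set q := periodicExtension T (A.indicator fun _ => v)
    have hq : MemLp q 2 (muW r) :=
      MemLp.of_bound (stronglyMeasurable_const.indicator hA).periodicExtension.aestronglyMeasurable
        ‖v‖ (ae_of_all _ fun _ => norm_indicator_le_norm_self _ _)
    have hq_per : ∀ᵐ t ∂volume.restrict (Ici 0), q (t + T) = q t :=
      ae_of_all _ (periodicExtension_add_self hT.ne' _)
    have h0 := H q hq hq_per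
    rw [integral_inner_muW_eq_integral_Ico hr hT hF hq hq_per] at h0
    rw [← integral_indicator hA]
    refine Eq.trans (setIntegral_congr_fun measurableSet_Ico fun s hs => ?_) h0
    by_cases hsA : s ∈ A <;> simp [q, periodicExtension_eq_self hT _ hs, hsA, P, real_inner_comm]
  refine hP.ae_eq_zero_of_forall_setIntegral_eq_zero fun A hA _ => ?_
  rw [← inner_self_eq_zero (𝕜 := ℝ), ← integral_inner hP.integrableOn, hP_inner A hA]

end Orthogonality

lemma tsum_exp_smul_add_nat_mul {E : Type*} [NormedAddCommGroup E] [NormedSpace ℝ E]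
    (r T s : ℝ) (F : ℝ → E) :
    ∑' k : ℕ, exp (-r * (s + k * T)) • F (s + k * T) =
      exp (-r * s) • ∑' k : ℕ, exp (-(r * k * T)) • F (s + k * T) := by
  rw [← tsum_const_smul'']
  congr with k
  rw [smul_smul, ← exp_add]
  ring_nf

theorem orthogonal_to_periodic_iff_general
    (r T : ℝ) (hr : 0 < r) (hT : 0 < T) (n : ℕ)
    (f : ℝ → EuclideanSpace ℝ (Fin n)) (hf : MemLp f 2 (muW r)) :
    (∀ q : ℝ → EuclideanSpace ℝ (Fin n), MemLp q 2 (muW r) →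
        (∀ᵐ t ∂(volume.restrict (Set.Ici (0:ℝ))), q (t + T) = q t) →
        ∫ t, ⟪f t, q t⟫ ∂(muW r) = 0) ↔
      (∀ᵐ s ∂(volume.restrict (Set.Ico (0:ℝ) T)),
        ∑' k : ℕ, Real.exp (-(r * k * T)) • f (s + k * T) = 0) := by
  have hRHS (s : ℝ) : ∑' k : ℕ, exp (-(r * k * T)) • f (s + k * T) = 0 ↔
      ∑' k : ℕ, exp (-r * (s + k * T)) • f (s + k * T) = 0 := by
    rw [tsum_exp_smul_add_nat_mul, smul_eq_zero_iff_right (exp_pos _).ne']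
  simp_rw [hRHS]
  refine ⟨ae_tsum_eq_zero_of_forall_periodic_integral_inner_eq_zero hr hT hf,
    fun h q hq hq_per => ?_⟩
  rw [integral_inner_muW_eq_integral_Ico hr hT hf hq hq_per]
  exact integral_eq_zero_of_ae (h.mono fun s hs => by
    simp only [hs, inner_zero_left, Pi.zero_apply])

/-- For `f ∈ L²(ℝ₊,μ_r;ℝⁿ)`, `f` is orthogonal to the `L²`-closure of the continuous
`T`-periodic functions (i.e. to the a.e. `T`-periodic elements of `L²`) if and only if
for a.e. `s ∈ [0,T)` one has `Σ_{k=0}^∞ e^{-rkT} f(s + kT) = 0`. -/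
theorem orthogonal_to_periodic_iff
    (r T : ℝ) (hr : 0 < r) (hT : 0 < T) (n : ℕ) (hn : 0 < n)
    (f : ℝ → EuclideanSpace ℝ (Fin n)) (hf : MemLp f 2 (muW r)) :
    (∀ q : ℝ → EuclideanSpace ℝ (Fin n), MemLp q 2 (muW r) →
        (∀ᵐ t ∂(volume.restrict (Set.Ici (0:ℝ))), q (t + T) = q t) →
        ∫ t, ⟪f t, q t⟫ ∂(muW r) = 0) ↔
      (∀ᵐ s ∂(volume.restrict (Set.Ico (0:ℝ) T)),
        ∑' k : ℕ, Real.exp (-(r * k * T)) • f (s + k * T) = 0) :=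
  orthogonal_to_periodic_iff_general r T hr hT n f hf
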